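/- arXiv:2506.08506 — 3 statements merged into one kernel-verified Lean document; each statement's English description precedes it below -/
import Mathlib

section
/- Let n ≥ 3 and let Q₁, Q₂ be real symmetric n×n matrices. Define H(Q₁,Q₂) := {(xᵀx, xᵀQ₁x, xᵀQ₂x) : x ∈ ℝⁿ} ⊆ ℝ³. Then H(Q₁,Q₂) is a convex cone, and H(Q₁,Q₂) = {(Tr(X), Tr(Q₁X), Tr(Q₂X)) : X real symmetric n×n positive semidefinite}. -/
/-!
Subtracting suitable multiples of `xᵀx` from `Q₁, Q₂`, closure of `H(Q₁, Q₂)` under addition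
reduces to finding a common nonzero zero of two quadratic forms `P, Q` when `P v + P w = 0` and
`Q v + Q w = 0` for some `v ≠ 0`. A rotation of the pencil spanned by `P, Q` makes `v, w`
isotropic for `Q` with `P v > 0 > P w`. Using a third direction `z`, `Q`-orthogonal to `v` and `w`
(it exists as `n ≥ 3`), one finds a path from `v` to a multiple of `w` (or to `z`) inside the
cone `Q = 0` avoiding `0`, and the intermediate value theorem produces the common zero. The SDP
description follows because a positive semidefinite `X` is a sum of rank-one matrices `b bᵀ`.
-/

open Matrix Set Module

namespace QuadraticMap

variable {R M : Type*} [CommRing R] [AddCommGroup M] [Module R M] (Q : QuadraticForm R M)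

theorem map_smul_add_smul (a b : R) (x y : M) :
    Q (a • x + b • y) = a * a * Q x + b * b * Q y + a * b * polar Q x y := by
  simp only [QuadraticMap.map_add, QuadraticMap.map_smul, polar_smul_left, polar_smul_right,
    smul_eq_mul]
  ring

theorem map_smul_add_smul_add_smul (a b c : R) (x y z : M) :
    Q (a • x + b • y + c • z) = a * a * Q x + b * b * Q y + c * c * Q z
      + a * b * polar Q x y + a * c * polar Q x z + b * c * polar Q y z := by
  rw [QuadraticMap.map_add (⇑Q), map_smul_add_smul, QuadraticMap.map_smul, polar_add_left,
    polar_smul_left, polar_smul_left, polar_smul_right, polar_smul_right, smul_eq_mul,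
    smul_eq_mul, smul_eq_mul, smul_eq_mul, smul_eq_mul]
  ring

end QuadraticMap

theorem exists_ne_zero_eq_zero_of_two_lt_finrank {K V : Type*} [Field K] [AddCommGroup V]
    [Module K V] (hV : 2 < finrank K V) (f g : V →ₗ[K] K) :
    ∃ z ≠ 0, f z = 0 ∧ g z = 0 := by
  have : FiniteDimensional K V := Module.finite_of_finrank_pos (by omega)
  have hker : LinearMap.ker (f.prod g) ≠ ⊥ :=
    LinearMap.ker_ne_bot_of_finrank_lt (by simpa using hV)
  obtain ⟨z, hz, hz0⟩ := Submodule.ne_bot_iff _ |>.mp hker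
  simp only [LinearMap.mem_ker, LinearMap.prod_apply, Function.prod_apply, Prod.mk_eq_zero] at hz
  exact ⟨z, hz0, hz⟩

namespace QuadraticMap

variable {E : Type*} [AddCommGroup E] [Module ℝ E] (P Q : QuadraticForm ℝ E)

theorem exists_common_isotropic_of_path {γ : ℝ → E}
    (hP : ContinuousOn (fun t => P (γ t)) (Icc 0 1)) (hQ : ∀ t, Q (γ t) = 0)
    (hγ : ∀ t ∈ Icc (0 : ℝ) 1, γ t ≠ 0) (h0 : 0 ≤ P (γ 0)) (h1 : P (γ 1) ≤ 0) :
    ∃ x ≠ 0, P x = 0 ∧ Q x = 0 := by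
  obtain ⟨t, ht, hPt⟩ := intermediate_value_Icc' zero_le_one hP ⟨h1, h0⟩
  exact ⟨γ t, hγ t ht, hPt, hQ t⟩

theorem exists_common_isotropic_of_polar_eq_zero {y z : E} (hQy : Q y = 0) (hQz : Q z = 0)
    (hyz : polar Q y z = 0) (hPy : 0 < P y) (hPz : P z < 0) :
    ∃ x ≠ 0, P x = 0 ∧ Q x = 0 := by
  refine exists_common_isotropic_of_path P Q (γ := fun t => (1 - t) • y + t • z) ?_ ?_ ?_
    (by simpa using hPy.le) (by simpa using hPz.le)
  · simp only [map_smul_add_smul]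
    fun_prop
  · intro t
    simp [map_smul_add_smul, hQy, hQz, hyz]
  · rintro t ⟨ht0, -⟩ hzero
    rcases ht0.eq_or_lt with rfl | ht0
    · simp_all
    · have hPtz : t * t * P z = (1 - t) * (1 - t) * P y := by
        rw [← smul_eq_mul, ← QuadraticMap.map_smul, eq_neg_of_add_eq_zero_right hzero,
          QuadraticMap.map_neg, QuadraticMap.map_smul, smul_eq_mul]
      nlinarith [mul_pos ht0 ht0, mul_self_nonneg (1 - t)]

theorem exists_common_isotropic_of_polar_ne_zero {v w z : E} (hQv : Q v = 0) (hQw : Q w = 0)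
    (hvw : polar Q v w ≠ 0) (hvz : polar Q v z = 0) (hwz : polar Q w z = 0) (hQz : Q z ≠ 0)
    (hPv : 0 < P v) (hPw : P w < 0) :
    ∃ x ≠ 0, P x = 0 ∧ Q x = 0 := by
  set c := -Q z / polar Q v w
  have hc0 : c ≠ 0 := div_ne_zero (neg_ne_zero.mpr hQz) hvw
  have hcvw : c * polar Q v w = -Q z := div_mul_cancel₀ _ hvw
  -- `Q (s • v + s' • w + r • z) = s * s' * polar Q v w + r * r * Q z` vanishes along this path.
  refine exists_common_isotropic_of_path P Q
    (γ := fun t => ((1 - t) * (1 - t)) • v + (c * (t * t)) • w + (t * (1 - t)) • z) ?_ ?_ ?_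
    ?_ ?_
  · simp only [map_smul_add_smul_add_smul]
    fun_prop
  · intro t
    simp only [map_smul_add_smul_add_smul, hQv, hQw, hvz, hwz]
    linear_combination (1 - t) * (1 - t) * t * t * hcvw
  · rintro t - hγ
    have hv := congrArg (polar Q v) hγ
    have hw := congrArg (polar Q w) hγ
    simp only [polar_add_right, polar_smul_right, polar_self, polar_zero_right, hQv, hQw, hvz,
      hwz, smul_eq_mul] at hv hw
    rw [polar_comm] at hw
    simp only [smul_zero, mul_zero, add_zero, zero_add, mul_eq_zero, hc0, hvw, or_false,
      false_or, or_self, sub_eq_zero] at hv hw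
    simp [hv] at hw
  · simpa [map_smul_add_smul_add_smul] using hPv.le
  · simp only [map_smul_add_smul_add_smul]
    simp only [sub_self, zero_mul, mul_zero, mul_one, zero_add, add_zero]
    exact mul_nonpos_of_nonneg_of_nonpos (mul_self_nonneg c) hPw.le

theorem exists_common_isotropic_of_isotropic (hE : 2 < finrank ℝ E) {v w : E} (hQv : Q v = 0)
    (hQw : Q w = 0) (hPv : 0 < P v) (hPw : P w < 0) :
    ∃ x ≠ 0, P x = 0 ∧ Q x = 0 := by
  by_cases hvw : polar Q v w = 0
  · exact exists_common_isotropic_of_polar_eq_zero P Q hQv hQw hvw hPv hPw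
  obtain ⟨z, hz0, hvz, hwz⟩ :=
    exists_ne_zero_eq_zero_of_two_lt_finrank hE (polarBilin Q v) (polarBilin Q w)
  rw [polarBilin_apply_apply] at hvz hwz
  by_cases hQz : Q z = 0
  · rcases lt_trichotomy (P z) 0 with hPz | hPz | hPz
    · exact exists_common_isotropic_of_polar_eq_zero P Q hQv hQz hvz hPv hPz
    · exact ⟨z, hz0, hPz, hQz⟩
    · exact exists_common_isotropic_of_polar_eq_zero P Q hQz hQw (by rwa [polar_comm]) hPz hPw
  · exact exists_common_isotropic_of_polar_ne_zero P Q hQv hQw hvw hvz hwz hQz hPv hPw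

theorem exists_common_isotropic_of_add_eq_zero (hE : 2 < finrank ℝ E) {v w : E} (hv : v ≠ 0)
    (hP : P v + P w = 0) (hQ : Q v + Q w = 0) :
    ∃ x ≠ 0, P x = 0 ∧ Q x = 0 := by
  by_cases hvPQ : P v = 0 ∧ Q v = 0
  · exact ⟨v, hv, hvPQ⟩
  have hr : 0 < P v * P v + Q v * Q v := by
    rcases not_and_or.mp hvPQ with h | h
    · exact add_pos_of_pos_of_nonneg (mul_self_pos.mpr h) (mul_self_nonneg _)
    · exact add_pos_of_nonneg_of_pos (mul_self_nonneg _) (mul_self_pos.mpr h)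
  -- The rotated pair has the same common zeros, and makes `v, w` isotropic for the second form.
  replace hP := eq_neg_of_add_eq_zero_right hP
  replace hQ := eq_neg_of_add_eq_zero_right hQ
  obtain ⟨x, hx, hPx, hQx⟩ := exists_common_isotropic_of_isotropic
    (P v • P + Q v • Q) (Q v • P - P v • Q) hE (v := v) (w := w)
    (by simp only [_root_.sub_apply, _root_.smul_apply, smul_eq_mul]; ring)
    (by simp only [_root_.sub_apply, _root_.smul_apply, smul_eq_mul, hP, hQ]; ring)
    (by simpa using hr)
    (by simp only [_root_.add_apply, _root_.smul_apply, smul_eq_mul, hP, hQ]; linarith)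
  simp only [_root_.add_apply, _root_.sub_apply, _root_.smul_apply, smul_eq_mul] at hPx hQx
  refine ⟨x, hx, ?_, ?_⟩
  · have h : (P v * P v + Q v * Q v) * P x = 0 := by linear_combination P v * hPx + Q v * hQx
    exact (mul_eq_zero.mp h).resolve_left hr.ne'
  · have h : (P v * P v + Q v * Q v) * Q x = 0 := by linear_combination Q v * hPx - P v * hQx
    exact (mul_eq_zero.mp h).resolve_left hr.ne'

theorem exists_map_eq_add_of_posDef (hE : 2 < finrank ℝ E) {N : QuadraticForm ℝ E}
    (hN : N.PosDef) (Q₁ Q₂ : QuadraticForm ℝ E) (v w : E) :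
    ∃ x, N x = N v + N w ∧ Q₁ x = Q₁ v + Q₁ w ∧ Q₂ x = Q₂ v + Q₂ w := by
  rcases eq_or_ne v 0 with rfl | hv
  · exact ⟨w, by simp⟩
  have hs : 0 < N v + N w := add_pos_of_pos_of_nonneg (hN v hv) (hN.nonneg w)
  obtain ⟨α, hα⟩ : ∃ α, α * (N v + N w) = Q₁ v + Q₁ w := ⟨_, div_mul_cancel₀ _ hs.ne'⟩
  obtain ⟨β, hβ⟩ : ∃ β, β * (N v + N w) = Q₂ v + Q₂ w := ⟨_, div_mul_cancel₀ _ hs.ne'⟩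
  obtain ⟨y, hy, hPy, hQy⟩ := exists_common_isotropic_of_add_eq_zero (Q₁ - α • N) (Q₂ - β • N)
    hE hv (w := w)
    (by simp only [_root_.sub_apply, _root_.smul_apply, smul_eq_mul]; linear_combination -hα)
    (by simp only [_root_.sub_apply, _root_.smul_apply, smul_eq_mul]; linear_combination -hβ)
  simp only [_root_.sub_apply, _root_.smul_apply, smul_eq_mul, sub_eq_zero] at hPy hQy
  have hc : √((N v + N w) / N y) * √((N v + N w) / N y) * N y = N v + N w := by
    rw [Real.mul_self_sqrt (div_nonneg hs.le (hN.nonneg y)), div_mul_cancel₀ _ (hN y hy).ne']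
  refine ⟨√((N v + N w) / N y) • y, ?_, ?_, ?_⟩ <;>
    simp only [QuadraticMap.map_smul, smul_eq_mul]
  · exact hc
  · rw [hPy, ← hα]; linear_combination α * hc
  · rw [hQy, ← hβ]; linear_combination β * hc

def brickmanCone (hE : 2 < finrank ℝ E) (N : QuadraticForm ℝ E) (hN : N.PosDef)
    (Q₁ Q₂ : QuadraticForm ℝ E) : PointedCone ℝ (ℝ × ℝ × ℝ) where
  carrier := range fun x => (N x, Q₁ x, Q₂ x)
  add_mem' := by
    rintro _ _ ⟨v, rfl⟩ ⟨w, rfl⟩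
    obtain ⟨x, hN, h₁, h₂⟩ := exists_map_eq_add_of_posDef hE hN Q₁ Q₂ v w
    exact ⟨x, by simp [hN, h₁, h₂]⟩
  zero_mem' := ⟨0, by simp⟩
  smul_mem' := by
    rintro ⟨t, ht⟩ _ ⟨x, rfl⟩
    exact ⟨√t • x, by simp [QuadraticMap.map_smul, Real.mul_self_sqrt ht]⟩

theorem coe_brickmanCone (hE : 2 < finrank ℝ E) (N : QuadraticForm ℝ E) (hN : N.PosDef)
    (Q₁ Q₂ : QuadraticForm ℝ E) :
    (brickmanCone hE N hN Q₁ Q₂ : Set (ℝ × ℝ × ℝ)) = range fun x => (N x, Q₁ x, Q₂ x) :=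
  rfl

end QuadraticMap

namespace Matrix

variable {ι : Type*} [Fintype ι]

theorem toQuadraticForm'_apply [DecidableEq ι] {R : Type*} [CommRing R] (M : Matrix ι ι R)
    (x : ι → R) :
    M.toQuadraticForm' x = x ⬝ᵥ M *ᵥ x := by
  simp [toQuadraticForm', toLinearMap₂'_apply']

theorem trace_mul_vecMulVec_self {R : Type*} [CommRing R] (M : Matrix ι ι R) (x : ι → R) :
    (M * vecMulVec x x).trace = x ⬝ᵥ M *ᵥ x := by
  rw [mul_vecMulVec, trace_vecMulVec, dotProduct_comm]

theorem PosSemidef.exists_eq_sum_vecMulVec_self [DecidableEq ι] {X : Matrix ι ι ℝ}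
    (hX : X.PosSemidef) :
    ∃ b : ι → ι → ℝ, X = ∑ i, vecMulVec (b i) (b i) := by
  open scoped MatrixOrder in
  obtain ⟨B, rfl⟩ := CStarAlgebra.nonneg_iff_eq_star_mul_self.mp hX.nonneg
  refine ⟨B, ?_⟩
  ext j k
  simp [mul_apply, vecMulVec_apply, sum_apply]

end Matrix

theorem brickman_cone_sdp_general {n : ℕ} (hn : 3 ≤ n)
    (Q₁ Q₂ : Matrix (Fin n) (Fin n) ℝ) :
    (∀ p ∈ {p : ℝ × ℝ × ℝ | ∃ x : Fin n → ℝ,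
        p = (x ⬝ᵥ x, x ⬝ᵥ Q₁.mulVec x, x ⬝ᵥ Q₂.mulVec x)},
      ∀ q ∈ {p : ℝ × ℝ × ℝ | ∃ x : Fin n → ℝ,
        p = (x ⬝ᵥ x, x ⬝ᵥ Q₁.mulVec x, x ⬝ᵥ Q₂.mulVec x)},
      p + q ∈ {p : ℝ × ℝ × ℝ | ∃ x : Fin n → ℝ,
        p = (x ⬝ᵥ x, x ⬝ᵥ Q₁.mulVec x, x ⬝ᵥ Q₂.mulVec x)}) ∧
    (∀ t : ℝ, 0 ≤ t →
      ∀ p ∈ {p : ℝ × ℝ × ℝ | ∃ x : Fin n → ℝ,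
        p = (x ⬝ᵥ x, x ⬝ᵥ Q₁.mulVec x, x ⬝ᵥ Q₂.mulVec x)},
      t • p ∈ {p : ℝ × ℝ × ℝ | ∃ x : Fin n → ℝ,
        p = (x ⬝ᵥ x, x ⬝ᵥ Q₁.mulVec x, x ⬝ᵥ Q₂.mulVec x)}) ∧
    {p : ℝ × ℝ × ℝ | ∃ x : Fin n → ℝ,
        p = (x ⬝ᵥ x, x ⬝ᵥ Q₁.mulVec x, x ⬝ᵥ Q₂.mulVec x)} =
      {p : ℝ × ℝ × ℝ | ∃ X : Matrix (Fin n) (Fin n) ℝ, X.IsSymm ∧ X.PosSemidef ∧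
        p = (X.trace, (Q₁ * X).trace, (Q₂ * X).trace)} := by
  have hdim : 2 < finrank ℝ (Fin n → ℝ) := by rw [finrank_fin_fun]; omega
  set C := QuadraticMap.brickmanCone hdim (1 : Matrix (Fin n) (Fin n) ℝ).toQuadraticForm'
    PosDef.one.toQuadraticForm' Q₁.toQuadraticForm' Q₂.toQuadraticForm'
  have hC : {p : ℝ × ℝ × ℝ | ∃ x : Fin n → ℝ,
      p = (x ⬝ᵥ x, x ⬝ᵥ Q₁.mulVec x, x ⬝ᵥ Q₂.mulVec x)} = C := by
    ext p
    simp [C, QuadraticMap.coe_brickmanCone, toQuadraticForm'_apply, eq_comm]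
  have hmem : ∀ x : Fin n → ℝ, (x ⬝ᵥ x, x ⬝ᵥ Q₁ *ᵥ x, x ⬝ᵥ Q₂ *ᵥ x) ∈ C :=
    fun x => hC.subset ⟨x, rfl⟩
  rw [hC]
  refine ⟨fun p hp q hq => C.add_mem hp hq, fun t ht p hp => C.smul_mem ht hp, ?_⟩
  ext p
  constructor
  · rintro ⟨x, rfl⟩
    have hx : (vecMulVec x x).PosSemidef := by simpa using posSemidef_vecMulVec_self_star x
    exact ⟨vecMulVec x x, isHermitian_iff_isSymm.mp hx.isHermitian, hx,
      by simp [trace_mul_vecMulVec_self, toQuadraticForm'_apply]⟩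
  · rintro ⟨X, -, hX, rfl⟩
    obtain ⟨b, rfl⟩ := hX.exists_eq_sum_vecMulVec_self
    rw [SetLike.mem_coe]
    convert C.sum_mem (t := Finset.univ) fun i _ => hmem (b i) using 1
    ext <;> simp [trace_sum, Matrix.mul_sum, trace_mul_vecMulVec_self, Prod.fst_sum,
      Prod.snd_sum]

/-- For `n ≥ 3` and real symmetric `Q₁, Q₂`, the homogenized Brickman
set `H(Q₁,Q₂) = {(xᵀx, xᵀQ₁x, xᵀQ₂x) : x ∈ ℝⁿ} ⊆ ℝ³` is a convex cone (closed under
addition and under multiplication by nonnegative scalars), and it has the SDP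
representation `H(Q₁,Q₂) = {(Tr X, Tr(Q₁X), Tr(Q₂X)) : X ⪰ 0}`. -/
theorem brickman_cone_sdp {n : ℕ} (hn : 3 ≤ n)
    (Q₁ Q₂ : Matrix (Fin n) (Fin n) ℝ) (hQ₁ : Q₁.IsSymm) (hQ₂ : Q₂.IsSymm) :
    (∀ p ∈ {p : ℝ × ℝ × ℝ | ∃ x : Fin n → ℝ,
        p = (x ⬝ᵥ x, x ⬝ᵥ Q₁.mulVec x, x ⬝ᵥ Q₂.mulVec x)},
      ∀ q ∈ {p : ℝ × ℝ × ℝ | ∃ x : Fin n → ℝ,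
        p = (x ⬝ᵥ x, x ⬝ᵥ Q₁.mulVec x, x ⬝ᵥ Q₂.mulVec x)},
      p + q ∈ {p : ℝ × ℝ × ℝ | ∃ x : Fin n → ℝ,
        p = (x ⬝ᵥ x, x ⬝ᵥ Q₁.mulVec x, x ⬝ᵥ Q₂.mulVec x)}) ∧
    (∀ t : ℝ, 0 ≤ t →
      ∀ p ∈ {p : ℝ × ℝ × ℝ | ∃ x : Fin n → ℝ,
        p = (x ⬝ᵥ x, x ⬝ᵥ Q₁.mulVec x, x ⬝ᵥ Q₂.mulVec x)},
      t • p ∈ {p : ℝ × ℝ × ℝ | ∃ x : Fin n → ℝ,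
        p = (x ⬝ᵥ x, x ⬝ᵥ Q₁.mulVec x, x ⬝ᵥ Q₂.mulVec x)}) ∧
    {p : ℝ × ℝ × ℝ | ∃ x : Fin n → ℝ,
        p = (x ⬝ᵥ x, x ⬝ᵥ Q₁.mulVec x, x ⬝ᵥ Q₂.mulVec x)} =
      {p : ℝ × ℝ × ℝ | ∃ X : Matrix (Fin n) (Fin n) ℝ, X.IsSymm ∧ X.PosSemidef ∧
        p = (X.trace, (Q₁ * X).trace, (Q₂ * X).trace)} :=
  brickman_cone_sdp_general hn Q₁ Q₂
end

section
/- Let f, c_1,…,c_m : ℝⁿ → ℝ be differentiable with ∇f L-Lipschitz and each ∇c_i L_i-Lipschitz (L, L_i > 0), let r : ℝⁿ → ℝ be convex, and let μ > 0. Let x ∈ ℝⁿ be strictly feasible (c_i(x) < 0 for all i), define D := {z ∈ ℝⁿ : c_i(x) + ∇c_i(x)ᵀ(z − x) + (L_i/2)‖z − x‖² < 0 for all i} (so x ∈ D), and suppose x⁺ attains the minimum over D of φ(z) := ∇f(x)ᵀ(z − x) + L‖z − x‖² + μ·B̃(z) + r(z), where B̃(z) := −Σ_{i=1}^m ln(−c_i(x)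 − ∇c_i(x)ᵀ(z − x) − (L_i/2)‖z − x‖²). Then c_i(x⁺) < 0 for all i, and F_μ(x⁺) ≤ F_μ(x) − (L/2)‖x⁺ − x‖², where F_μ(z) := f(z) + r(z) − μΣ_{i=1}^m ln(−c_i(z)) on the strictly feasible set. -/
open scoped RealInnerProductSpace
open Real Set

/-!
The quadratic upper bound `g z ≤ g x + ⟪∇g x, z - x⟫ + (K/2)‖z - x‖²` for a function `g` with
`K`-Lipschitz gradient (the descent lemma) does all the work. Applied to each `cᵢ` it says that
`cᵢ` lies below its surrogate, so the surrogate-feasible `x⁺` is strictly feasible and the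
surrogate barrier at `x⁺` is at most the true barrier `-Σ ln(-cᵢ(x⁺))`. Applied to `f` it gives
`f(x⁺) ≤ f(x) + ⟪∇f x, x⁺ - x⟫ + (L/2)‖x⁺ - x‖²`. Comparing `x⁺` with the competitor `x`, at which
the surrogate objective equals `r(x) - μ Σ ln(-cᵢ(x))`, leaves exactly `-(L/2)‖x⁺ - x‖²` to spare.
-/

section DescentLemma

variable {F : Type*} [NormedAddCommGroup F] [InnerProductSpace ℝ F] [CompleteSpace F]

theorem HasGradientAt.hasDerivAt_comp_add_smul {f : F → ℝ} {g x v : F} {t : ℝ}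
    (h : HasGradientAt f g (x + t • v)) : HasDerivAt (fun s : ℝ => f (x + s • v)) ⟪g, v⟫ t := by
  have hline : HasDerivAt (fun s : ℝ => x + s • v) v t := by
    simpa using ((hasDerivAt_id t).smul_const v).const_add x
  have := h.hasFDerivAt.comp_hasDerivAt t hline
  simp only [InnerProductSpace.toDual_apply_apply] at this
  exact this

theorem le_add_inner_add_sq_of_lipschitz_gradient {f : F → ℝ} {f' : F → F}
    (hf : ∀ x, HasGradientAt f (f' x) x) {L : ℝ} (hlip : ∀ x y, ‖f' x - f' y‖ ≤ L * ‖x - y‖)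
    (x y : F) : f y ≤ f x + ⟪f' x, y - x⟫ + L / 2 * ‖y - x‖ ^ 2 := by
  set v := y - x
  have hderiv : ∀ t : ℝ, HasDerivAt (fun s : ℝ => f (x + s • v)) ⟪f' (x + t • v), v⟫ t :=
    fun t => (hf _).hasDerivAt_comp_add_smul
  have hbound : ∀ t : ℝ, HasDerivAt (fun s : ℝ => f x + s * ⟪f' x, v⟫ + L / 2 * s ^ 2 * ‖v‖ ^ 2)
      (⟪f' x, v⟫ + L * t * ‖v‖ ^ 2) t := fun t => by
    refine ((((hasDerivAt_id' t).mul_const ⟪f' x, v⟫).const_add (f x)).add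
      (((hasDerivAt_pow 2 t).const_mul (L / 2)).mul_const (‖v‖ ^ 2))).congr_deriv ?_
    ring
  have hslope : ∀ t ∈ Ico (0 : ℝ) 1, ⟪f' (x + t • v), v⟫ ≤ ⟪f' x, v⟫ + L * t * ‖v‖ ^ 2 := by
    rintro t ⟨ht0, -⟩
    have hgrad : ‖f' (x + t • v) - f' x‖ ≤ L * (t * ‖v‖) := by
      simpa [norm_smul, abs_of_nonneg ht0] using hlip (x + t • v) x
    calc ⟪f' (x + t • v), v⟫ = ⟪f' x, v⟫ + ⟪f' (x + t • v) - f' x, v⟫ := by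
          rw [inner_sub_left]; ring
      _ ≤ ⟪f' x, v⟫ + ‖f' (x + t • v) - f' x‖ * ‖v‖ := by gcongr; exact real_inner_le_norm _ _
      _ ≤ ⟪f' x, v⟫ + L * (t * ‖v‖) * ‖v‖ := by gcongr
      _ = ⟪f' x, v⟫ + L * t * ‖v‖ ^ 2 := by ring
  have key := image_le_of_deriv_right_le_deriv_boundary
    (fun t _ => (hderiv t).continuousAt.continuousWithinAt) (fun t _ => (hderiv t).hasDerivWithinAt)
    (by simp) (fun t _ => (hbound t).continuousAt.continuousWithinAt)
    (fun t _ => (hbound t).hasDerivWithinAt) hslope (right_mem_Icc.2 zero_le_one)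
  simpa [v] using key

end DescentLemma

theorem ceb_descent_step_general {n m : ℕ}
    (f r : EuclideanSpace ℝ (Fin n) → ℝ)
    (c : Fin m → EuclideanSpace ℝ (Fin n) → ℝ)
    (f' : EuclideanSpace ℝ (Fin n) → EuclideanSpace ℝ (Fin n))
    (c' : Fin m → EuclideanSpace ℝ (Fin n) → EuclideanSpace ℝ (Fin n))
    (hf : ∀ x, HasGradientAt f (f' x) x)
    (hc : ∀ i x, HasGradientAt (c i) (c' i x) x)
    (L : ℝ) (Li : Fin m → ℝ)
    (hflip : ∀ x y, ‖f' x - f' y‖ ≤ L * ‖x - y‖)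
    (hclip : ∀ i x y, ‖c' i x - c' i y‖ ≤ Li i * ‖x - y‖)
    (μ : ℝ) (hμ : 0 < μ)
    -- the strictly feasible base point
    (x : EuclideanSpace ℝ (Fin n)) (hx : ∀ i, c i x < 0)
    -- `x⁺` minimizes φ over the (open) surrogate-feasible region D
    (xp : EuclideanSpace ℝ (Fin n))
    (hxpD : ∀ i, c i x + ⟪c' i x, xp - x⟫ + (Li i / 2) * ‖xp - x‖ ^ 2 < 0)
    (hxpmin : ∀ z, (∀ i, c i x + ⟪c' i x, z - x⟫ + (Li i / 2) * ‖z - x‖ ^ 2 < 0) →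
      ⟪f' x, xp - x⟫ + L * ‖xp - x‖ ^ 2 -
          μ * ∑ i, Real.log (-(c i x) - ⟪c' i x, xp - x⟫ - (Li i / 2) * ‖xp - x‖ ^ 2) +
          r xp ≤
        ⟪f' x, z - x⟫ + L * ‖z - x‖ ^ 2 -
          μ * ∑ i, Real.log (-(c i x) - ⟪c' i x, z - x⟫ - (Li i / 2) * ‖z - x‖ ^ 2) +
          r z) :
    (∀ i, c i xp < 0) ∧
    f xp + r xp - μ * ∑ i, Real.log (-(c i xp)) ≤
      f x + r x - μ * ∑ i, Real.log (-(c i x)) - (L / 2) * ‖xp - x‖ ^ 2 := by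
  have hc_le_surrogate : ∀ i, c i xp ≤ c i x + ⟪c' i x, xp - x⟫ + (Li i / 2) * ‖xp - x‖ ^ 2 :=
    fun i => le_add_inner_add_sq_of_lipschitz_gradient (hc i) (hclip i) x xp
  have hfeas : ∀ i, c i xp < 0 := fun i => (hc_le_surrogate i).trans_lt (hxpD i)
  refine ⟨hfeas, ?_⟩
  have hcompare_x := hxpmin x (by simpa using hx)
  simp only [sub_self, inner_zero_right, norm_zero, ne_eq, OfNat.ofNat_ne_zero,
    not_false_eq_true, zero_pow, mul_zero, sub_zero, add_zero] at hcompare_x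
  have hf_le := le_add_inner_add_sq_of_lipschitz_gradient hf hflip x xp
  have hbarrier : μ * ∑ i, Real.log (-(c i x) - ⟪c' i x, xp - x⟫ - (Li i / 2) * ‖xp - x‖ ^ 2)
      ≤ μ * ∑ i, Real.log (-(c i xp)) := by
    gcongr with i
    · linarith [hxpD i]
    · linarith [hc_le_surrogate i]
  linarith

/-- (One step of Algorithm CEB.)  Minimizing the linearized objective
plus proximal term plus the log-barrier of the quadratic surrogate constraints over the
surrogate-feasible region preserves strict feasibility and decreases the barrier
function `F_μ(z) = f(z) + r(z) − μΣᵢ ln(−cᵢ(z))` by at least `(L/2)‖x⁺ − x‖²`. -/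
theorem ceb_descent_step {n m : ℕ}
    (f r : EuclideanSpace ℝ (Fin n) → ℝ)
    (c : Fin m → EuclideanSpace ℝ (Fin n) → ℝ)
    (f' : EuclideanSpace ℝ (Fin n) → EuclideanSpace ℝ (Fin n))
    (c' : Fin m → EuclideanSpace ℝ (Fin n) → EuclideanSpace ℝ (Fin n))
    (hf : ∀ x, HasGradientAt f (f' x) x)
    (hc : ∀ i x, HasGradientAt (c i) (c' i x) x)
    (L : ℝ) (Li : Fin m → ℝ) (hL : 0 < L) (hLi : ∀ i, 0 < Li i)
    (hflip : ∀ x y, ‖f' x - f' y‖ ≤ L * ‖x - y‖)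
    (hclip : ∀ i x y, ‖c' i x - c' i y‖ ≤ Li i * ‖x - y‖)
    (hrconv : ConvexOn ℝ univ r)
    (μ : ℝ) (hμ : 0 < μ)
    -- the strictly feasible base point
    (x : EuclideanSpace ℝ (Fin n)) (hx : ∀ i, c i x < 0)
    -- `x⁺` minimizes φ over the (open) surrogate-feasible region D
    (xp : EuclideanSpace ℝ (Fin n))
    (hxpD : ∀ i, c i x + ⟪c' i x, xp - x⟫ + (Li i / 2) * ‖xp - x‖ ^ 2 < 0)
    (hxpmin : ∀ z, (∀ i, c i x + ⟪c' i x, z - x⟫ + (Li i / 2) * ‖z - x‖ ^ 2 < 0) →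
      ⟪f' x, xp - x⟫ + L * ‖xp - x‖ ^ 2 -
          μ * ∑ i, Real.log (-(c i x) - ⟪c' i x, xp - x⟫ - (Li i / 2) * ‖xp - x‖ ^ 2) +
          r xp ≤
        ⟪f' x, z - x⟫ + L * ‖z - x‖ ^ 2 -
          μ * ∑ i, Real.log (-(c i x) - ⟪c' i x, z - x⟫ - (Li i / 2) * ‖z - x‖ ^ 2) +
          r z) :
    (∀ i, c i xp < 0) ∧
    f xp + r xp - μ * ∑ i, Real.log (-(c i xp)) ≤
      f x + r x - μ * ∑ i, Real.log (-(c i x)) - (L / 2) * ‖xp - x‖ ^ 2 :=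
  ceb_descent_step_general f r c f' c' hf hc L Li hflip hclip μ hμ x hx xp hxpD hxpmin
end

section
/- Let f, c_1,…,c_m : ℝⁿ → ℝ be differentiable with ∇f L-Lipschitz and each ∇c_i L_i-Lipschitz, and let μ > 0. Let x⁰ be strictly feasible, suppose F_μ(z) := f(z) − μΣ_{i=1}^m ln(−c_i(z)) satisfies F_μ ≥ F* on the strictly feasible set for some F* ∈ ℝ, and let (x^k)_{k≥0} be generated by Algorithm CEB with r ≡ 0: x^{k+1} attains the minimum over D_k := {z : c_i(x^k) + ∇c_i(x^k)ᵀ(z − x^k) + (L_i/2)‖z − x^k‖² < 0 ∀i} of z ↦ ∇f(x^k)ᵀ(z − x^k) + L‖z − x^k‖² + μ·B̃_k(z), where B̃_k(z) := −Σ_i ln(−c_i(x^k) − ∇c_i(x^k)ᵀ(z − x^k) − (L_i/2)‖z − x^k‖²). For each k set d^k := x^{k+1} − x^k and λ^k_i := −μ/(c_i(x^k) + ∇c_i(x^k)ᵀd^k + (L_i/2)‖d^k‖²). Then λ^k_i > 0, the stationarity identity ∇f(x^k) + 2L·d^k + Σ_{i=1}^m λ^k_i(∇c_i(x^k) + L_i·d^k)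 = 0 holds, and if ‖λ^k‖_∞ ≤ B for all 0 ≤ k ≤ K−1, then min_{0≤k≤K−1} ‖∇f(x^k) + Σ_{i=1}^m λ^k_i ∇c_i(x^k)‖ ≤ (2L + B·Σ_{i=1}^m L_i)·(2(F_μ(x⁰) − F*)/(L·K))^{1/2}. -/
/-!
A gradient that is `M`-Lipschitz gives the descent lemma
`g y ≤ g x + ⟪∇g x, y - x⟫ + (M/2)‖y - x‖²`. Applied to the constraints, it puts the model
feasible set `Dₖ` inside the strictly feasible set and shows that the model barrier
underestimates the true one there; applied to `f`, and combined with comparing the model value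
at `xᵏ⁺¹` with its value at `xᵏ`, it shows that one step decreases `F_μ` by at least
`(L/2)‖dᵏ‖²`. Telescoping, some `k < K` has `‖dᵏ‖² ≤ 2(F_μ(x⁰) - F*)/(LK)`. Since `Dₖ` is open,
`xᵏ⁺¹` is a critical point of the subproblem, and its first-order condition is the
stationarity identity; it rewrites as `∇f(xᵏ) + Σ λᵢ ∇cᵢ(xᵏ) = -(2L + Σ λᵢ Lᵢ) dᵏ`.
-/

open scoped RealInnerProductSpace
open Real Set

section

variable {E : Type*} [NormedAddCommGroup E] [InnerProductSpace ℝ E]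

/-- CEB models `f` by `quadModel 0 (∇f xᵏ) xᵏ L` and each `cᵢ` by
`quadModel (cᵢ xᵏ) (∇cᵢ xᵏ) xᵏ (Lᵢ/2)`. -/
def quadModel (b : ℝ) (w x₀ : E) (s : ℝ) (z : E) : ℝ := b + ⟪w, z - x₀⟫ + s * ‖z - x₀‖ ^ 2

@[simp]
theorem quadModel_self (b : ℝ) (w x₀ : E) (s : ℝ) : quadModel b w x₀ s x₀ = b := by
  simp [quadModel]

variable [CompleteSpace E]

theorem hasGradientAt_quadModel (b : ℝ) (w x₀ : E) (s : ℝ) (p : E) :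
    HasGradientAt (quadModel b w x₀ s) (w + (2 * s) • (p - x₀)) p := by
  have hsub := (hasFDerivAt_id (𝕜 := ℝ) p).sub_const x₀
  have h := ((hasFDerivAt_const b p).fun_add (((innerSL ℝ w).hasFDerivAt).comp p hsub)).fun_add
    (hsub.norm_sq.const_mul s)
  rw [hasGradientAt_iff_hasFDerivAt]
  refine h.congr_fderiv ?_
  ext v
  simp only [ContinuousLinearMap.comp_id, zero_add, id_eq, map_sub, add_apply, coe_innerSL_apply,
    smul_apply, sub_apply, nsmul_eq_mul, Nat.cast_ofNat, smul_eq_mul, map_add, map_smul,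
    InnerProductSpace.toDual_apply_apply, add_right_inj]
  ring

theorem continuous_quadModel (b : ℝ) (w x₀ : E) (s : ℝ) : Continuous (quadModel b w x₀ s) :=
  continuous_iff_continuousAt.2 fun p => (hasGradientAt_quadModel b w x₀ s p).continuousAt

theorem le_quadModel_of_lipschitz_gradient {g : E → ℝ} {G : E → E} {M : ℝ}
    (hg : ∀ p, HasGradientAt g (G p) p) (hG : ∀ p q, ‖G p - G q‖ ≤ M * ‖p - q‖) (x y : E) :
    g y ≤ quadModel (g x) (G x) x (M / 2) y := by
  set d := y - x
  let h : ℝ → ℝ := fun t => g (x + t • d) - t * ⟪G x, d⟫ - M / 2 * ‖d‖ ^ 2 * t ^ 2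
  have hderiv : ∀ t, HasDerivAt h (⟪G (x + t • d) - G x, d⟫ - M * ‖d‖ ^ 2 * t) t := by
    intro t
    have hline : HasDerivAt (fun t : ℝ => x + t • d) d t := by
      simpa using ((hasDerivAt_id t).smul_const d).const_add x
    have hgt := (hasGradientAt_iff_hasFDerivAt.1 (hg (x + t • d))).comp_hasDerivAt t hline
    refine ((hgt.sub ((hasDerivAt_id t).mul_const ⟪G x, d⟫)).sub
      ((hasDerivAt_pow 2 t).const_mul (M / 2 * ‖d‖ ^ 2))).congr_deriv ?_
    simp only [InnerProductSpace.toDual_apply_apply, inner_sub_left]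
    ring
  have hanti : AntitoneOn h (Icc 0 1) := by
    refine antitoneOn_of_hasDerivWithinAt_nonpos (convex_Icc 0 1)
      (fun t _ => (hderiv t).continuousAt.continuousWithinAt)
      (fun t _ => (hderiv t).hasDerivWithinAt) fun t ht => ?_
    rw [interior_Icc] at ht
    have hlip : ‖G (x + t • d) - G x‖ ≤ M * t * ‖d‖ := by
      simpa [norm_smul, abs_of_pos ht.1, mul_assoc] using hG (x + t • d) x
    have := (real_inner_le_norm _ d).trans (mul_le_mul_of_nonneg_right hlip (norm_nonneg d))
    nlinarith
  have h0 : h 0 = g x := by simp [h]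
  have h1 : h 1 = g y - ⟪G x, y - x⟫ - M / 2 * ‖y - x‖ ^ 2 := by simp [h, d]
  have := hanti (left_mem_Icc.2 zero_le_one) (right_mem_Icc.2 zero_le_one) zero_le_one
  rw [h0, h1] at this
  rw [quadModel]
  linarith

theorem barrier_subproblem_stationary {ι : Type*} [Fintype ι] {a x₀ p : E} {L μ : ℝ}
    {b : ι → ℝ} {w : ι → E} {s : ι → ℝ}
    (hp : ∀ i, quadModel (b i) (w i) x₀ (s i) p < 0)
    (hmin : ∀ z, (∀ i, quadModel (b i) (w i) x₀ (s i) z < 0) →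
      quadModel 0 a x₀ L p - μ * ∑ i, log (-quadModel (b i) (w i) x₀ (s i) p) ≤
        quadModel 0 a x₀ L z - μ * ∑ i, log (-quadModel (b i) (w i) x₀ (s i) z)) :
    a + (2 * L) • (p - x₀) +
      ∑ i, (-μ / quadModel (b i) (w i) x₀ (s i) p) • (w i + (2 * s i) • (p - x₀)) = 0 := by
  have hD : IsOpen {z | ∀ i, quadModel (b i) (w i) x₀ (s i) z < 0} := by
    simp only [ofPred_forall]
    exact isOpen_iInter_of_finite fun i => isOpen_lt (continuous_quadModel _ _ _ _) continuous_const
  have hlocmin : IsLocalMin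
      (fun z => quadModel 0 a x₀ L z - μ * ∑ i, log (-quadModel (b i) (w i) x₀ (s i) z)) p :=
    Filter.mem_of_superset (hD.mem_nhds hp) hmin
  have hlog : ∀ i ∈ Finset.univ,
      HasFDerivAt (fun z => log (-quadModel (b i) (w i) x₀ (s i) z))
        ((quadModel (b i) (w i) x₀ (s i) p)⁻¹ •
          InnerProductSpace.toDual ℝ E (w i + (2 * s i) • (p - x₀))) p := by
    intro i _
    -- `Real.log` is even, so `log ∘ (-q)` has the derivative of `log ∘ q`.
    simpa only [log_neg_eq_log] using
      (hasGradientAt_iff_hasFDerivAt.1 (hasGradientAt_quadModel (b i) (w i) x₀ (s i) p)).log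
        (hp i).ne
  have hderiv := (hasGradientAt_iff_hasFDerivAt.1 (hasGradientAt_quadModel 0 a x₀ L p)).sub
    ((HasFDerivAt.fun_sum hlog).const_mul μ)
  apply (InnerProductSpace.toDual ℝ E).injective
  rw [map_zero, ← hlocmin.hasFDerivAt_eq_zero hderiv]
  simp only [map_add, map_sum, map_smul, Finset.smul_sum, smul_smul, sub_eq_add_neg,
    ← Finset.sum_neg_distrib, ← neg_smul, div_eq_mul_inv, neg_mul]

theorem barrier_add_le_of_model_le {ι : Type*} [Fintype ι] {f : E → ℝ} {f' : E → E}
    {c : ι → E → ℝ} {c' : ι → E → E} {L μ : ℝ} {Li : ι → ℝ}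
    (hf : ∀ z, HasGradientAt f (f' z) z) (hc : ∀ i z, HasGradientAt (c i) (c' i z) z)
    (hflip : ∀ z z', ‖f' z - f' z'‖ ≤ L * ‖z - z'‖)
    (hclip : ∀ i z z', ‖c' i z - c' i z'‖ ≤ Li i * ‖z - z'‖) (hμ : 0 ≤ μ) {x y : E}
    (hy : ∀ i, quadModel (c i x) (c' i x) x (Li i / 2) y < 0)
    (hmin : quadModel 0 (f' x) x L y - μ * ∑ i, log (-quadModel (c i x) (c' i x) x (Li i / 2) y)
      ≤ -(μ * ∑ i, log (-c i x))) :
    f y - μ * ∑ i, log (-c i y) + L / 2 * ‖y - x‖ ^ 2 ≤ f x - μ * ∑ i, log (-c i x) := by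
  have hlog : ∑ i, log (-quadModel (c i x) (c' i x) x (Li i / 2) y) ≤ ∑ i, log (-c i y) :=
    Finset.sum_le_sum fun i _ => log_le_log (neg_pos.2 (hy i))
      (neg_le_neg (le_quadModel_of_lipschitz_gradient (hc i) (hclip i) x y))
  have hfy := le_quadModel_of_lipschitz_gradient hf hflip x y
  simp only [quadModel, zero_add] at hfy hmin hlog
  linarith [mul_le_mul_of_nonneg_left hlog hμ]

end

theorem norm_add_sum_smul_le_of_stationary {E ι : Type*} [NormedAddCommGroup E] [NormedSpace ℝ E]
    [Fintype ι] {g d : E} {w : ι → E} {lam Li : ι → ℝ} {L B r : ℝ} (hL : 0 ≤ L)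
    (hlam : ∀ i, 0 ≤ lam i) (hLi : ∀ i, 0 ≤ Li i) (hB : ∀ i, lam i ≤ B)
    (h : g + (2 * L) • d + ∑ i, lam i • (w i + Li i • d) = 0) (hd : ‖d‖ ≤ r) :
    ‖g + ∑ i, lam i • w i‖ ≤ (2 * L + B * ∑ i, Li i) * r := by
  have hres : g + ∑ i, lam i • w i = -((2 * L + ∑ i, lam i * Li i) • d) := by
    rw [← sub_eq_zero, ← h]
    simp only [smul_add, Finset.sum_add_distrib, smul_smul, ← Finset.sum_smul]
    module
  have hnonneg : 0 ≤ ∑ i, lam i * Li i := Finset.sum_nonneg fun i _ => mul_nonneg (hlam i) (hLi i)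
  have hle : ∑ i, lam i * Li i ≤ B * ∑ i, Li i := by
    rw [Finset.mul_sum]
    exact Finset.sum_le_sum fun i _ => mul_le_mul_of_nonneg_right (hB i) (hLi i)
  rw [hres, norm_neg, norm_smul, Real.norm_of_nonneg (by positivity)]
  have hr : 0 ≤ r := (norm_nonneg d).trans hd
  calc (2 * L + ∑ i, lam i * Li i) * ‖d‖ ≤ (2 * L + ∑ i, lam i * Li i) * r := by gcongr
    _ ≤ (2 * L + B * ∑ i, Li i) * r := by gcongr

theorem exists_lt_le_div_of_add_le {F a : ℕ → ℝ} {Fstar : ℝ} {K : ℕ} (hK : 0 < K)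
    (hdec : ∀ k, F (k + 1) + a k ≤ F k) (hlow : Fstar ≤ F K) :
    ∃ k < K, a k ≤ (F 0 - Fstar) / K := by
  have hsum : ∑ k ∈ Finset.range K, a k ≤ ∑ k ∈ Finset.range K, (F 0 - Fstar) / K := by
    calc ∑ k ∈ Finset.range K, a k ≤ ∑ k ∈ Finset.range K, (F k - F (k + 1)) :=
          Finset.sum_le_sum fun k _ => by linarith [hdec k]
      _ = F 0 - F K := Finset.sum_range_sub' F K
      _ ≤ ∑ k ∈ Finset.range K, (F 0 - Fstar) / K := by
          rw [Finset.sum_const, Finset.card_range, nsmul_eq_mul, mul_div_cancel₀ _ (by positivity)]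
          linarith
  obtain ⟨k, hk, hak⟩ := Finset.exists_le_of_sum_le (Finset.nonempty_range_iff.2 hK.ne') hsum
  exact ⟨k, Finset.mem_range.1 hk, hak⟩

/-- (Theorem 5 in the paper: `O(ε⁻²)` complexity of Algorithm CEB
with `r ≡ 0`.)  Along the CEB iterates, the barrier multipliers
`λᵏᵢ = −μ/(cᵢ(xᵏ) + ∇cᵢ(xᵏ)ᵀdᵏ + (Lᵢ/2)‖dᵏ‖²)` are positive, the stationarity identity
`∇f(xᵏ) + 2Ldᵏ + Σᵢ λᵏᵢ(∇cᵢ(xᵏ) + Lᵢdᵏ) = 0` holds, and if `‖λᵏ‖_∞ ≤ B` for all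
`k < K` then `min_{k<K} ‖∇f(xᵏ) + Σᵢ λᵏᵢ∇cᵢ(xᵏ)‖ ≤ (2L + BΣᵢLᵢ)√(2(F_μ(x⁰) − F*)/(LK))`. -/
theorem ceb_complexity {n m : ℕ}
    (f : EuclideanSpace ℝ (Fin n) → ℝ)
    (c : Fin m → EuclideanSpace ℝ (Fin n) → ℝ)
    (f' : EuclideanSpace ℝ (Fin n) → EuclideanSpace ℝ (Fin n))
    (c' : Fin m → EuclideanSpace ℝ (Fin n) → EuclideanSpace ℝ (Fin n))
    (hf : ∀ x, HasGradientAt f (f' x) x)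
    (hc : ∀ i x, HasGradientAt (c i) (c' i x) x)
    (L : ℝ) (Li : Fin m → ℝ) (hL : 0 < L) (hLi : ∀ i, 0 < Li i)
    (hflip : ∀ x y, ‖f' x - f' y‖ ≤ L * ‖x - y‖)
    (hclip : ∀ i x y, ‖c' i x - c' i y‖ ≤ Li i * ‖x - y‖)
    (μ : ℝ) (hμ : 0 < μ)
    -- lower bound of the barrier function on the strictly feasible set
    (Fstar : ℝ)
    (hFstar : ∀ z, (∀ i, c i z < 0) →
      Fstar ≤ f z - μ * ∑ i, Real.log (-(c i z)))
    -- Algorithm CEB (with r ≡ 0): the iterates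
    (x : ℕ → EuclideanSpace ℝ (Fin n))
    (hx0 : ∀ i, c i (x 0) < 0)
    (hstepD : ∀ k i, c i (x k) + ⟪c' i (x k), x (k + 1) - x k⟫ +
      (Li i / 2) * ‖x (k + 1) - x k‖ ^ 2 < 0)
    (hstepmin : ∀ k z,
      (∀ i, c i (x k) + ⟪c' i (x k), z - x k⟫ + (Li i / 2) * ‖z - x k‖ ^ 2 < 0) →
      ⟪f' (x k), x (k + 1) - x k⟫ + L * ‖x (k + 1) - x k‖ ^ 2 -
          μ * ∑ i, Real.log (-(c i (x k)) - ⟪c' i (x k), x (k + 1) - x k⟫ -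
            (Li i / 2) * ‖x (k + 1) - x k‖ ^ 2) ≤
        ⟪f' (x k), z - x k⟫ + L * ‖z - x k‖ ^ 2 -
          μ * ∑ i, Real.log (-(c i (x k)) - ⟪c' i (x k), z - x k⟫ -
            (Li i / 2) * ‖z - x k‖ ^ 2))
    -- the barrier multipliers
    (lam : ℕ → Fin m → ℝ)
    (hlam : ∀ k i, lam k i = -μ / (c i (x k) + ⟪c' i (x k), x (k + 1) - x k⟫ +
      (Li i / 2) * ‖x (k + 1) - x k‖ ^ 2)) :
    (∀ k i, 0 < lam k i) ∧
    (∀ k, f' (x k) + (2 * L) • (x (k + 1) - x k) +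
      ∑ i, lam k i • (c' i (x k) + Li i • (x (k + 1) - x k)) = 0) ∧
    (∀ (B : ℝ) (K : ℕ), 1 ≤ K → (∀ k < K, ∀ i, lam k i ≤ B) →
      ∃ k < K, ‖f' (x k) + ∑ i, lam k i • c' i (x k)‖ ≤
        (2 * L + B * ∑ i, Li i) *
          Real.sqrt (2 * ((f (x 0) - μ * ∑ i, Real.log (-(c i (x 0)))) - Fstar) /
            (L * K))) := by
  have hmodel : ∀ k z, (∀ i, quadModel (c i (x k)) (c' i (x k)) (x k) (Li i / 2) z < 0) →
      quadModel 0 (f' (x k)) (x k) L (x (k + 1)) -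
          μ * ∑ i, log (-quadModel (c i (x k)) (c' i (x k)) (x k) (Li i / 2) (x (k + 1))) ≤
        quadModel 0 (f' (x k)) (x k) L z -
          μ * ∑ i, log (-quadModel (c i (x k)) (c' i (x k)) (x k) (Li i / 2) z) := by
    intro k z hz
    simpa only [quadModel, zero_add, neg_add'] using hstepmin k z hz
  have hlam_pos : ∀ k i, 0 < lam k i := fun k i => by
    rw [hlam]
    exact div_pos_of_neg_of_neg (neg_neg_of_pos hμ) (hstepD k i)
  have hstat : ∀ k, f' (x k) + (2 * L) • (x (k + 1) - x k) +
      ∑ i, lam k i • (c' i (x k) + Li i • (x (k + 1) - x k)) = 0 := fun k => by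
    simpa only [quadModel, ← hlam, mul_div_cancel₀ _ (two_ne_zero' ℝ)] using
      barrier_subproblem_stationary (hstepD k) (hmodel k)
  refine ⟨hlam_pos, hstat, fun B K hK hB => ?_⟩
  have hfeas : ∀ k i, c i (x k) < 0
    | 0 => hx0
    | k + 1 => fun i =>
      (le_quadModel_of_lipschitz_gradient (hc i) (hclip i) _ _).trans_lt (hstepD k i)
  have hdec : ∀ k, (f (x (k + 1)) - μ * ∑ i, log (-c i (x (k + 1)))) +
      L / 2 * ‖x (k + 1) - x k‖ ^ 2 ≤ f (x k) - μ * ∑ i, log (-c i (x k)) := fun k =>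
    barrier_add_le_of_model_le hf hc hflip hclip hμ.le (hstepD k)
      (by simpa using hmodel k (x k) (by simpa using hfeas k))
  obtain ⟨k, hkK, hk⟩ := exists_lt_le_div_of_add_le
    (F := fun k => f (x k) - μ * ∑ i, log (-c i (x k))) hK hdec (hFstar _ (hfeas K))
  refine ⟨k, hkK, norm_add_sum_smul_le_of_stationary hL.le (fun i => (hlam_pos k i).le)
    (fun i => (hLi i).le) (hB k hkK) (hstat k) (Real.le_sqrt_of_sq_le ?_)⟩
  rw [le_div_iff₀ (by positivity)] at hk ⊢
  linarith
end
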